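/- If Y is a contractible space with at least n points, then TC_{Cⁿ(Y×I)}(Cⁿ(Y) × Cⁿ(Y)) = 1. -/

import Mathlib

/-!
A contraction of `Y` gives a homotopy `G` from `fst` to `snd` on `Y × Y`, i.e. a continuous
choice of paths in `Y`. To join two configurations in `Y × {0}`, move the `i`-th point along
`G` applied to its start and end, and meanwhile raise it to the height `c i * t * (1 - t)` for
fixed distinct `c i ∈ I`. At interior times the heights differ, and at the ends the
configurations are the given ones, so the motion never collides: one global section, and
`TC = 1` as the domain is nonempty.
-/

open Set

/-- The relative topological complexity `TC_X(A)` for `A ⊆ X × X`. -/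
noncomputable def relTC (X : Type*) [TopologicalSpace X] (A : Set (X × X)) : ℕ∞ :=
  sInf {N : ℕ∞ | ∃ k : ℕ, N = k ∧ ∃ U : Fin k → Set A,
    (∀ i, IsOpen (U i)) ∧ (⋃ i, U i) = univ ∧
    ∀ i, ∃ s : C(U i, C(unitInterval, X)),
      ∀ p : U i, s p 0 = (p.1.1 : X × X).1 ∧ s p 1 = (p.1.1 : X × X).2}

/-- The ordered configuration space of `n` distinct points in `W`. -/
def Conf (n : ℕ) (W : Type*) : Set (Fin n → W) :=
  {w | Function.Injective w}

/-- The subspace of `Cⁿ(Y × I)` of configurations lying in `Y × {0}`,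
i.e. the copy of `Cⁿ(Y)` inside `Cⁿ(Y × I)`. -/
def baseConf (n : ℕ) (Y : Type*) [TopologicalSpace Y] :
    Set ↥(Conf n (Y × unitInterval)) :=
  {c | ∀ i, ((c : Fin n → Y × unitInterval) i).2 = 0}

open unitInterval ContinuousMap

section RelTC

variable {X : Type*} [TopologicalSpace X] {A : Set (X × X)}

theorem relTC_le_one (s : C(A, C(I, X))) (hs : ∀ p : A, s p 0 = p.1.1 ∧ s p 1 = p.1.2) :
    relTC X A ≤ 1 :=
  sInf_le ⟨1, Nat.cast_one.symm, fun _ => univ, fun _ => isOpen_univ, iUnion_const _,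
    fun _ => ⟨s.restrict univ, fun p => hs p⟩⟩

theorem one_le_relTC (hA : A.Nonempty) : 1 ≤ relTC X A := by
  refine le_sInf ?_
  rintro N ⟨k, rfl, U, -, hcover, -⟩
  rcases Nat.eq_zero_or_pos k with rfl | hk
  · obtain ⟨p, hp⟩ := hA
    simpa using hcover.symm.subset (mem_univ (⟨p, hp⟩ : A))
  · exact_mod_cast hk

end RelTC

theorem ContractibleSpace.homotopic_fst_snd (Y : Type*) [TopologicalSpace Y]
    [ContractibleSpace Y] :
    (ContinuousMap.fst : C(Y × Y, Y)).Homotopic .snd := by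
  obtain ⟨y₀, h⟩ := id_nullhomotopic Y
  have hfst := h.comp (Homotopic.refl (fst : C(Y × Y, Y)))
  have hsnd := h.comp (Homotopic.refl (snd : C(Y × Y, Y)))
  rw [const_comp] at hfst hsnd
  exact hfst.trans hsnd.symm

theorem exists_injective_unitInterval (n : ℕ) : ∃ c : Fin n → I, Function.Injective c :=
  have : Infinite I := (Icc_infinite (zero_lt_one' ℝ)).to_subtype
  ⟨_, (Fin.valEmbedding.trans (Infinite.natEmbedding I)).injective⟩

section ConfMotion

variable {Y : Type*} [TopologicalSpace Y] {n : ℕ}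

def confMotion (G : Homotopy (ContinuousMap.fst : C(Y × Y, Y)) .snd) (c : Fin n → I)
    (a b : Fin n → Y × I) (t : I) : Fin n → Y × I :=
  fun i => (G (t, (a i).1, (b i).1), c i * (t * σ t))

theorem Continuous.confMotion {G : Homotopy (ContinuousMap.fst : C(Y × Y, Y)) .snd}
    {c : Fin n → I} {Z : Type*} [TopologicalSpace Z] {a b : Z → Fin n → Y × I} {t : Z → I}
    (ha : Continuous a) (hb : Continuous b) (ht : Continuous t) :
    Continuous fun z => _root_.confMotion G c (a z) (b z) (t z) := by
  unfold _root_.confMotion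
  fun_prop

variable (G : Homotopy (ContinuousMap.fst : C(Y × Y, Y)) .snd)

theorem confMotion_zero (c : Fin n → I) {a : Fin n → Y × I} (ha : ∀ i, (a i).2 = 0)
    (b : Fin n → Y × I) : confMotion G c a b 0 = a := by
  funext i
  exact Prod.ext (by simp [confMotion]) (by simp [confMotion, ha i])

theorem confMotion_one (c : Fin n → I) (a : Fin n → Y × I) {b : Fin n → Y × I}
    (hb : ∀ i, (b i).2 = 0) : confMotion G c a b 1 = b := by
  funext i
  exact Prod.ext (by simp [confMotion]) (by simp [confMotion, hb i])

theorem confMotion_mem_conf {c : Fin n → I} (hc : Function.Injective c)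
    {a b : Fin n → Y × I} (ha : a ∈ Conf n (Y × I)) (hb : b ∈ Conf n (Y × I))
    (ha0 : ∀ i, (a i).2 = 0) (hb0 : ∀ i, (b i).2 = 0) (t : I) :
    confMotion G c a b t ∈ Conf n (Y × I) := by
  rcases eq_or_ne t 0 with rfl | ht0
  · rwa [confMotion_zero G c ha0]
  rcases eq_or_ne t 1 with rfl | ht1
  · rwa [confMotion_one G c a hb0]
  have hlift : t * σ t ≠ 0 := mul_ne_zero ht0 (symm_eq_zero.not.mpr ht1)
  exact fun i j hij => hc (mul_right_cancel₀ hlift (congrArg Prod.snd hij))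

end ConfMotion

theorem relTC_baseConf_le_one (n : ℕ) (Y : Type*) [TopologicalSpace Y] [ContractibleSpace Y] :
    relTC (Conf n (Y × I)) (baseConf n Y ×ˢ baseConf n Y) ≤ 1 := by
  obtain ⟨G⟩ := ContractibleSpace.homotopic_fst_snd Y
  obtain ⟨c, hc⟩ := exists_injective_unitInterval n
  have hcont : Continuous fun q : (baseConf n Y ×ˢ baseConf n Y : Set _) × I =>
      confMotion G c q.1.1.1 q.1.1.2 q.2 :=
    .confMotion (by fun_prop) (by fun_prop) (by fun_prop)
  let motion : C((baseConf n Y ×ˢ baseConf n Y : Set _) × I, Conf n (Y × I)) :=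
    ⟨fun q => ⟨_, confMotion_mem_conf G hc q.1.1.1.2 q.1.1.2.2 q.1.2.1 q.1.2.2 q.2⟩,
      hcont.subtype_mk _⟩
  refine relTC_le_one motion.curry fun p => ⟨Subtype.ext ?_, Subtype.ext ?_⟩
  · exact confMotion_zero G c p.2.1 _
  · exact confMotion_one G c _ p.2.2

theorem baseConf_prod_nonempty {n : ℕ} {Y : Type*} [TopologicalSpace Y]
    (hY : ∃ f : Fin n → Y, Function.Injective f) :
    (baseConf n Y ×ˢ baseConf n Y).Nonempty := by
  obtain ⟨f, hf⟩ := hY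
  let x : Conf n (Y × I) := ⟨fun i => (f i, 0), fun i j hij => hf (congrArg Prod.fst hij)⟩
  exact ⟨(x, x), fun _ => rfl, fun _ => rfl⟩

/-- If `Y` is a contractible space with at least `n` points, then
`TC_{Cⁿ(Y×I)}(Cⁿ(Y) × Cⁿ(Y)) = 1`. -/
theorem stmt16 (n : ℕ) (Y : Type*) [TopologicalSpace Y] [ContractibleSpace Y]
    (hY : ∃ f : Fin n → Y, Function.Injective f) :
    relTC ↥(Conf n (Y × unitInterval)) (baseConf n Y ×ˢ baseConf n Y) = 1 :=
  (relTC_baseConf_le_one n Y).antisymm (one_le_relTC (baseConf_prod_nonempty hY))
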